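/- arXiv:1910.02205 — 8 statements merged into one kernel-verified Lean document; each statement's English description precedes it below -/
import Mathlib

section
/- Let (X,d) be a metric space and let u, u_1, u_2, ... be fuzzy sets in F_USC(X). Then u_n Γ-converges to u if and only if for every α ∈ (0,1] one has {x : u(x) > α} ⊆ liminf_{n→∞} [u_n]_α ⊆ limsup_{n→∞} [u_n]_α ⊆ [u]_α. -/
open Set Filter Metric Topology MeasureTheory

/-- The α-cut of a fuzzy set `u : X → ℝ`: for `α ≠ 0` it is `{x | u x ≥ α}`,
and for `α = 0` it is the closure of `{x | u x > 0}`. -/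
noncomputable def cut {X : Type*} [MetricSpace X] (u : X → ℝ) (α : ℝ) : Set X :=
  if α = 0 then closure {x | 0 < u x} else {x | α ≤ u x}

/-- `u` is a normal upper semicontinuous fuzzy set: it takes values in `[0,1]` and
all α-cuts (`α ∈ [0,1]`) are nonempty and closed. -/
def FUSC {X : Type*} [MetricSpace X] (u : X → ℝ) : Prop :=
  (∀ x, u x ∈ Set.Icc (0:ℝ) 1) ∧
    ∀ α ∈ Set.Icc (0:ℝ) 1, (cut u α).Nonempty ∧ IsClosed (cut u α)

/-- `F_USCG(X)`: fuzzy sets in `F_USC(X)` with compact positive α-cuts. -/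
def FUSCG {X : Type*} [MetricSpace X] (u : X → ℝ) : Prop :=
  FUSC u ∧ ∀ α ∈ Set.Ioc (0:ℝ) 1, IsCompact (cut u α)

/-- `F_USCB(X)`: fuzzy sets in `F_USC(X)` with compact support. -/
def FUSCB {X : Type*} [MetricSpace X] (u : X → ℝ) : Prop :=
  FUSC u ∧ IsCompact (cut u 0)

/-- Kuratowski lower limit of a sequence of sets. -/
def kurLiminf {Y : Type*} [MetricSpace Y] (C : ℕ → Set Y) : Set Y :=
  {y | ∃ f : ℕ → Y, (∀ n, f n ∈ C n) ∧ Tendsto f atTop (𝓝 y)}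

/-- Kuratowski upper limit of a sequence of sets. -/
def kurLimsup {Y : Type*} [MetricSpace Y] (C : ℕ → Set Y) : Set Y :=
  {y | ∃ φ : ℕ → ℕ, StrictMono φ ∧
        ∃ f : ℕ → Y, (∀ n, f n ∈ C (φ n)) ∧ Tendsto f atTop (𝓝 y)}

/-- Kuratowski convergence of a sequence of sets to a set. -/
def KurConv {Y : Type*} [MetricSpace Y] (C : ℕ → Set Y) (D : Set Y) : Prop :=
  kurLiminf C = D ∧ kurLimsup C = D

/-- The endograph of `u`: `{(x,t) ∈ X × [0,1] : u x ≥ t}`. -/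
def endo {X : Type*} [MetricSpace X] (u : X → ℝ) : Set (X × ℝ) :=
  {p | p.2 ∈ Set.Icc (0:ℝ) 1 ∧ p.2 ≤ u p.1}

/-- The sendograph of `u`: `end u ∩ ([u]₀ × [0,1])`. -/
noncomputable def sendo {X : Type*} [MetricSpace X] (u : X → ℝ) : Set (X × ℝ) :=
  endo u ∩ (cut u 0) ×ˢ (Set.Icc (0:ℝ) 1)

/-- Γ-convergence: Kuratowski convergence of endographs. -/
def GammaConv {X : Type*} [MetricSpace X] (un : ℕ → X → ℝ) (u : X → ℝ) : Prop :=
  KurConv (fun n => endo (un n)) (endo u)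

/-- The endograph metric. -/
noncomputable def Hend {X : Type*} [MetricSpace X] (u v : X → ℝ) : ℝ :=
  hausdorffDist (endo u) (endo v)

/-- The sendograph metric. -/
noncomputable def Hsend {X : Type*} [MetricSpace X] (u v : X → ℝ) : ℝ :=
  hausdorffDist (sendo u) (sendo v)

/-- The set of platform points of `u`:
`α ∈ (0,1)` with `closure {u > α}` a proper subset of `[u]_α`. -/
def Pset {X : Type*} [MetricSpace X] (u : X → ℝ) : Set ℝ :=
  {α | α ∈ Set.Ioo (0:ℝ) 1 ∧ closure {x | α < u x} ⊂ cut u α}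

/-- `P₀(u)`: the set of `α ∈ (0,1)` such that `H([u]_β, [u]_α)` does not tend to `0`
as `β → α`. -/
def P0set {X : Type*} [MetricSpace X] (u : X → ℝ) : Set ℝ :=
  {α | α ∈ Set.Ioo (0:ℝ) 1 ∧
    ¬ Tendsto (fun β => hausdorffDist (cut u β) (cut u α)) (𝓝[≠] α) (𝓝 0)}


lemma cut_pos {X : Type*} [MetricSpace X] (u : X → ℝ) {α : ℝ} (hα : α ≠ 0) :
    cut u α = {x | α ≤ u x} := if_neg hα

lemma kurLiminf_subset_kurLimsup {Y : Type*} [MetricSpace Y] (C : ℕ → Set Y) :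
    kurLiminf C ⊆ kurLimsup C := by
  rintro y ⟨f, hf, hft⟩
  exact ⟨id, strictMono_id, f, hf, hft⟩

lemma tendsto_infDist_of_mem_kurLiminf {Y : Type*} [MetricSpace Y] {C : ℕ → Set Y} {y : Y}
    (h : y ∈ kurLiminf C) : Tendsto (fun n => infDist y (C n)) atTop (𝓝 0) := by
  obtain ⟨f, hf, hft⟩ := h
  rw [tendsto_iff_dist_tendsto_zero] at hft
  refine squeeze_zero (g := fun n => dist y (f n)) (fun n => infDist_nonneg) (fun n => ?_) ?_
  · exact infDist_le_dist_of_mem (hf n)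
  · simpa [dist_comm] using hft

lemma mem_kurLiminf_of_tendsto_infDist {Y : Type*} [MetricSpace Y] {C : ℕ → Set Y} {y : Y}
    (hC : ∀ n, (C n).Nonempty)
    (h : Tendsto (fun n => infDist y (C n)) atTop (𝓝 0)) : y ∈ kurLiminf C := by
  have hch : ∀ n : ℕ, ∃ c ∈ C n, dist y c < infDist y (C n) + 1/(n+1) := fun n =>
    (infDist_lt_iff (hC n)).1 (lt_add_of_pos_right _ (by positivity))
  choose f hf hfd using hch
  refine ⟨f, hf, ?_⟩
  rw [tendsto_iff_dist_tendsto_zero]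
  refine squeeze_zero (g := fun n => infDist y (C n) + 1/(n+1))
    (fun n => dist_nonneg) (fun n => ?_) ?_
  · rw [dist_comm]; exact (hfd n).le
  · have := h.add tendsto_one_div_add_atTop_nhds_zero_nat
    simpa using this

lemma closure_subset_kurLiminf {Y : Type*} [MetricSpace Y] {C : ℕ → Set Y} {S : Set Y}
    (hC : ∀ n, (C n).Nonempty) (hS : S ⊆ kurLiminf C) : closure S ⊆ kurLiminf C := by
  intro y hy
  apply mem_kurLiminf_of_tendsto_infDist hC
  rw [Metric.tendsto_atTop]
  intro ε hε
  obtain ⟨z, hzS, hz⟩ := Metric.mem_closure_iff.1 hy (ε/2) (by linarith)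
  have hz' := tendsto_infDist_of_mem_kurLiminf (hS hzS)
  rw [Metric.tendsto_atTop] at hz'
  obtain ⟨N, hN⟩ := hz' (ε/2) (by linarith)
  refine ⟨N, fun n hn => ?_⟩
  have h1 := hN n hn
  have h2 : infDist y (C n) ≤ infDist z (C n) + dist y z := infDist_le_infDist_add_dist
  rw [Real.dist_eq, sub_zero, abs_of_nonneg infDist_nonneg] at h1 ⊢
  linarith [infDist_nonneg (x := z) (s := C n)]


theorem gamma_convergence_iff_cut_sandwich
    {X : Type*} [MetricSpace X] (u : X → ℝ) (un : ℕ → X → ℝ)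
    (hu : FUSC u) (hun : ∀ n, FUSC (un n)) :
    GammaConv un u ↔
      ∀ α ∈ Set.Ioc (0:ℝ) 1,
        {x | α < u x} ⊆ kurLiminf (fun n => cut (un n) α) ∧
        kurLiminf (fun n => cut (un n) α) ⊆ kurLimsup (fun n => cut (un n) α) ∧
        kurLimsup (fun n => cut (un n) α) ⊆ cut u α := by
  constructor
  · rintro ⟨hinf, hsup⟩ α ⟨hα0, hα1⟩
    refine ⟨?_, kurLiminf_subset_kurLimsup _, ?_⟩
    · intro x hx
      have hxe : (x, u x) ∈ endo u := ⟨hu.1 x, le_refl _⟩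
      rw [← hinf] at hxe
      obtain ⟨f, hf, hft⟩ := hxe
      have h1 : Tendsto (fun n => (f n).1) atTop (𝓝 x) :=
        (continuous_fst.tendsto _).comp hft
      have h2 : Tendsto (fun n => (f n).2) atTop (𝓝 (u x)) :=
        (continuous_snd.tendsto _).comp hft
      have hev : ∀ᶠ n in atTop, α < (f n).2 := h2.eventually (eventually_gt_nhds hx)
      have hne : ∀ n, (cut (un n) α).Nonempty := fun n =>
        ((hun n).2 α ⟨hα0.le, hα1⟩).1
      choose c hc using hne
      refine ⟨fun n => if α ≤ (f n).2 then (f n).1 else c n, fun n => ?_, ?_⟩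
      · by_cases hcase : α ≤ (f n).2
        · simp only [if_pos hcase]
          rw [cut_pos _ hα0.ne']
          exact le_trans hcase (hf n).2
        · simp only [if_neg hcase]; exact hc n
      · refine h1.congr' ?_
        filter_upwards [hev] with n hn
        rw [if_pos hn.le]
    · rintro x ⟨φ, hφ, f, hf, hft⟩
      have hmem : (x, α) ∈ endo u := by
        rw [← hsup]
        refine ⟨φ, hφ, fun n => (f n, α), fun n => ?_, ?_⟩
        · refine ⟨⟨hα0.le, hα1⟩, ?_⟩
          have := hf n
          simp only [cut_pos _ hα0.ne', Set.mem_setOf_eq] at this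
          exact this
        · exact hft.prodMk_nhds tendsto_const_nhds
      rw [cut_pos _ hα0.ne']
      exact hmem.2
  · intro h
    have hne : ∀ n, (endo (un n)).Nonempty := fun n => by
      obtain ⟨x₀, _⟩ := ((hun n).2 0 ⟨le_refl _, zero_le_one⟩).1
      exact ⟨(x₀, 0), ⟨le_refl _, zero_le_one⟩, ((hun n).1 x₀).1⟩
    have hB : kurLimsup (fun n => endo (un n)) ⊆ endo u := by
      rintro ⟨x, t⟩ ⟨φ, hφ, f, hf, hft⟩
      have h1 : Tendsto (fun n => (f n).1) atTop (𝓝 x) :=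
        (continuous_fst.tendsto _).comp hft
      have h2 : Tendsto (fun n => (f n).2) atTop (𝓝 t) :=
        (continuous_snd.tendsto _).comp hft
      have ht0 : (0:ℝ) ≤ t :=
        le_of_tendsto_of_tendsto' tendsto_const_nhds h2 (fun n => (hf n).1.1)
      have ht1 : t ≤ 1 :=
        le_of_tendsto_of_tendsto' h2 tendsto_const_nhds (fun n => (hf n).1.2)
      refine ⟨⟨ht0, ht1⟩, ?_⟩
      by_contra hut
      push_neg at hut
      have hu0 : 0 ≤ u x := (hu.1 x).1
      set α := (u x + t)/2 with hαdef
      have htpos : 0 < t := lt_of_le_of_lt hu0 hut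
      have hα0 : 0 < α := by simp only [hαdef]; linarith
      have hαt : α < t := by simp only [hαdef]; linarith
      have hα1 : α ≤ 1 := by linarith
      have huxα : u x < α := by simp only [hαdef]; linarith
      obtain ⟨N, hN⟩ := eventually_atTop.1 (h2.eventually (eventually_gt_nhds hαt))
      have hx : x ∈ kurLimsup (fun n => cut (un n) α) := by
        refine ⟨fun j => φ (j + N), fun a b hab => hφ (by omega),
          fun j => (f (j + N)).1, fun j => ?_, ?_⟩
        · show (f (j + N)).1 ∈ cut (un (φ (j + N))) α
          rw [cut_pos _ hα0.ne']
          exact le_trans (hN (j + N) (by omega)).le (hf (j + N)).2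
        · exact h1.comp (tendsto_add_atTop_nat N)
      have := (h α ⟨hα0, hα1⟩).2.2 hx
      simp only [cut_pos _ hα0.ne', Set.mem_setOf_eq] at this
      linarith
    have hA : endo u ⊆ kurLiminf (fun n => endo (un n)) := by
      have hS : {p : X × ℝ | p.2 ∈ Set.Icc (0:ℝ) 1 ∧ (p.2 = 0 ∨ (0 < p.2 ∧ p.2 < u p.1))} ⊆
          kurLiminf (fun n => endo (un n)) := by
        rintro ⟨x, t⟩ ⟨⟨ht0, ht1⟩, hcase⟩
        rcases hcase with h0 | ⟨htp, hlt⟩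
        · dsimp only at h0
          subst h0
          exact ⟨fun n => (x, 0), fun n => ⟨⟨le_refl _, zero_le_one⟩, ((hun n).1 x).1⟩,
            tendsto_const_nhds⟩
        · obtain ⟨f, hf, hft⟩ := (h t ⟨htp, ht1⟩).1 hlt
          refine ⟨fun n => (f n, t), fun n => ⟨⟨ht0, ht1⟩, ?_⟩, hft.prodMk_nhds tendsto_const_nhds⟩
          have := hf n
          simp only [cut_pos _ htp.ne', Set.mem_setOf_eq] at this
          exact this
      refine fun p hp => closure_subset_kurLiminf hne hS ?_
      obtain ⟨⟨ht0, ht1⟩, htu⟩ := hp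
      obtain ⟨x, t⟩ := p
      dsimp only at ht0 ht1 htu ⊢
      have hu0 : 0 ≤ u x := (hu.1 x).1
      have htend : Tendsto (fun k : ℕ => ((x, t - t / (k + 1)) : X × ℝ)) atTop (𝓝 (x, t)) := by
        refine Tendsto.prodMk_nhds tendsto_const_nhds ?_
        have : Tendsto (fun k : ℕ => t / (k + 1)) atTop (𝓝 0) := by
          have h0 := tendsto_one_div_add_atTop_nhds_zero_nat.const_mul t
          simpa [div_eq_mul_inv, mul_comm] using h0
        simpa using tendsto_const_nhds.sub this
      refine mem_closure_of_tendsto htend (Eventually.of_forall fun k => ?_)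
      have hk1 : (0:ℝ) < (k:ℝ) + 1 := by positivity
      have hdiv : 0 ≤ t / (k + 1) := by positivity
      have hdiv' : t / (k + 1) ≤ t := by
        rw [div_le_iff₀ hk1]
        nlinarith
      constructor
      · exact ⟨by linarith, by linarith⟩
      · by_cases hz : t - t / (k + 1) = 0
        · exact Or.inl hz
        · refine Or.inr ⟨lt_of_le_of_ne (by linarith) (Ne.symm hz), ?_⟩
          have : 0 < t := by
            by_contra htneg
            push_neg at htneg
            have : t = 0 := le_antisymm htneg ht0
            apply hz
            rw [this]; simp
          have : 0 < t / (k + 1) := by positivity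
          linarith
    have hls := kurLiminf_subset_kurLimsup (fun n => endo (un n))
    exact ⟨subset_antisymm (hls.trans hB) hA, subset_antisymm hB (hA.trans hls)⟩
end

section
/- Let (X,d) be a metric space and let u ∈ F_USCG(X). Then P_0(u) = P(u), and P(u) is at most countable. -/
open Set Filter Metric Topology MeasureTheory

/-!
For `α > 0` the cuts are the superlevel sets `{α ≤ u}`. As `β ↑ α` they decrease to `[u]_α`, so by
compactness they enter every `ε`-thickening of `[u]_α`: the left limit always exists. As `β ↓ α`
they increase to `{α < u}`, whose closure is contained in `[u]_α`; by compactness of `[u]_α` the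
right limit is `0` exactly when that closure is all of `[u]_α`, i.e. when `α ∉ P(u)`. A point of
`[u]_α \ closure {α < u}` is a local maximum of `u` with value `α`, and a function on a second
countable space takes only countably many values at local maxima; the positive part of `u` is
second countable, being a countable union of compact cuts.
-/

theorem tendsto_zero_of_nonneg_of_forall_eventually_le {ι : Type*} {l : Filter ι} {g : ι → ℝ}
    (hg : ∀ i, 0 ≤ g i) (h : ∀ ε > 0, ∀ᶠ i in l, g i ≤ ε) : Tendsto g l (𝓝 0) :=
  tendsto_order.2 ⟨fun _ ha => Eventually.of_forall fun i => ha.trans_le (hg i),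
    fun a ha => (h (a / 2) (half_pos ha)).mono fun _ hi => hi.trans_lt (half_lt_self ha)⟩

theorem setOf_le_subset_setOf_le {X β : Type*} [Preorder β] {f : X → β} {a b : β} (h : a ≤ b) :
    {x | b ≤ f x} ⊆ {x | a ≤ f x} :=
  fun _ hx => h.trans hx

section LocalMax

open TopologicalSpace

variable {X β : Type*} [TopologicalSpace X] [PartialOrder β]

/-- Distinct values at local maxima need distinct basic open sets on which they are the maximum. -/
theorem countable_image_setOf_isLocalMax [SecondCountableTopology X] (f : X → β) :
    (f '' {x | IsLocalMax f x}).Countable := by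
  have hcover : f '' {x | IsLocalMax f x} ⊆
      ⋃ s ∈ countableBasis X, {a | ∃ x ∈ s, f x = a ∧ ∀ y ∈ s, f y ≤ a} := by
    rintro _ ⟨x, hx, rfl⟩
    obtain ⟨s, hsB, hxs, hs⟩ := (isBasis_countableBasis X).mem_nhds_iff.1 hx
    exact mem_biUnion hsB ⟨x, hxs, rfl, hs⟩
  refine ((countable_countableBasis X).biUnion fun s _ => Subsingleton.countable ?_).mono hcover
  rintro _ ⟨x, hx, rfl, hmax⟩ _ ⟨y, hy, rfl, hmax'⟩
  exact le_antisymm (hmax' x hx) (hmax y hy)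

theorem TopologicalSpace.IsSeparable.countable_image_isLocalMax [PseudoMetrizableSpace X]
    {s : Set X} (hs : IsSeparable s) (f : X → β) :
    (f '' {x | x ∈ s ∧ IsLocalMax f x}).Countable := by
  have := hs.secondCountableTopology
  refine (countable_image_setOf_isLocalMax (f ∘ (↑) : s → β)).mono ?_
  rintro _ ⟨x, ⟨hxs, hx⟩, rfl⟩
  exact ⟨⟨x, hxs⟩, hx.comp_continuous continuous_subtype_val.continuousAt, rfl⟩

end LocalMax

section Superlevel

variable {X : Type*} [MetricSpace X]

theorem hausdorffDist_le_of_subset_of_subset_thickening {s t : Set X} {ε : ℝ} (hε : 0 ≤ ε)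
    (hst : s ⊆ t) (hts : t ⊆ thickening ε s) : hausdorffDist s t ≤ ε := by
  refine hausdorffDist_le_of_mem_dist hε (fun x hx => ⟨x, hst hx, by rwa [dist_self]⟩) ?_
  intro x hx
  obtain ⟨y, hy, hxy⟩ := mem_thickening_iff.1 (hts hx)
  exact ⟨y, hy, hxy.le⟩

theorem tendsto_hausdorffDist_superlevel_nhdsLT {f : X → ℝ} {α : ℝ}
    (hK : ∀ᶠ β in 𝓝[<] α, IsCompact {x | β ≤ f x}) :
    Tendsto (fun β => hausdorffDist {x | β ≤ f x} {x | α ≤ f x}) (𝓝[<] α) (𝓝 0) := by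
  obtain ⟨β₀, hβ₀, hβ₀K⟩ := mem_nhdsLT_iff_exists_Ioo_subset.1 hK
  have : Nonempty (Ioo β₀ α) := nonempty_Ioo_subtype hβ₀
  refine tendsto_zero_of_nonneg_of_forall_eventually_le (fun _ => hausdorffDist_nonneg)
    fun ε hε => ?_
  have hinter : ∀ x ∈ ⋂ γ : Ioo β₀ α, {x | (γ : ℝ) ≤ f x}, α ≤ f x := by
    intro x hx
    by_contra! hfx
    obtain ⟨γ, hγ, hγα⟩ := exists_between (max_lt hβ₀ hfx)
    exact (max_lt_iff.1 hγ).2.not_ge (mem_iInter.1 hx ⟨γ, (max_lt_iff.1 hγ).1, hγα⟩)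
  obtain ⟨⟨γ, hγ⟩, hγε⟩ := exists_subset_nhds_of_isCompact
    (V := fun γ : Ioo β₀ α => {x | (γ : ℝ) ≤ f x})
    (Antitone.directed_ge fun _ _ h => setOf_le_subset_setOf_le h) (fun γ => hβ₀K γ.2)
    (U := thickening ε {x | α ≤ f x})
    fun x hx => isOpen_thickening.mem_nhds (self_subset_thickening hε _ (hinter x hx))
  filter_upwards [Ioo_mem_nhdsLT hγ.2] with β hβ
  rw [hausdorffDist_comm]
  exact hausdorffDist_le_of_subset_of_subset_thickening hε.le (setOf_le_subset_setOf_le hβ.2.le)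
    ((setOf_le_subset_setOf_le hβ.1.le).trans hγε)

theorem tendsto_hausdorffDist_superlevel_nhdsGT {f : X → ℝ} {α : ℝ}
    (hK : IsCompact {x | α ≤ f x}) (hcl : {x | α ≤ f x} ⊆ closure {x | α < f x}) :
    Tendsto (fun β => hausdorffDist {x | β ≤ f x} {x | α ≤ f x}) (𝓝[>] α) (𝓝 0) := by
  refine tendsto_zero_of_nonneg_of_forall_eventually_le (fun _ => hausdorffDist_nonneg)
    fun ε hε => ?_
  have hcover : {x | α ≤ f x} ⊆ ⋃ γ : Ioi α, thickening ε {x | (γ : ℝ) ≤ f x} := by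
    intro x hx
    obtain ⟨y, hy, hxy⟩ := Metric.mem_closure_iff.1 (hcl hx) ε hε
    exact mem_iUnion.2 ⟨⟨f y, hy⟩, mem_thickening_iff.2 ⟨y, le_refl (f y), hxy⟩⟩
  obtain ⟨⟨γ, hγ⟩, hγε⟩ := hK.elim_directed_cover _ (fun _ => isOpen_thickening) hcover
    (Antitone.directed_le fun _ _ h => thickening_subset_of_subset ε (setOf_le_subset_setOf_le h))
  filter_upwards [Ioc_mem_nhdsGT hγ] with β hβ
  exact hausdorffDist_le_of_subset_of_subset_thickening hε.le (setOf_le_subset_setOf_le hβ.1.le)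
    (hγε.trans (thickening_subset_of_subset ε (setOf_le_subset_setOf_le hβ.2)))

theorem not_tendsto_hausdorffDist_superlevel_nhdsGT {f : X → ℝ} {α : ℝ}
    (hbdd : Bornology.IsBounded {x | α ≤ f x})
    (hne : ∀ᶠ β in 𝓝[>] α, {x | β ≤ f x}.Nonempty)
    (hcl : ¬ {x | α ≤ f x} ⊆ closure {x | α < f x}) :
    ¬ Tendsto (fun β => hausdorffDist {x | β ≤ f x} {x | α ≤ f x}) (𝓝[>] α) (𝓝 0) := by
  obtain ⟨x₀, hx₀, hx₀cl⟩ := not_subset.1 hcl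
  obtain ⟨δ, hδ, hfar⟩ : ∃ δ > 0, ∀ y, α < f y → δ ≤ dist x₀ y := by
    simpa [Metric.mem_closure_iff] using hx₀cl
  intro h
  obtain ⟨β, hβne, hβδ, hαβ⟩ :=
    (hne.and ((h.eventually (gt_mem_nhds hδ)).and self_mem_nhdsWithin)).exists
  rw [hausdorffDist_comm] at hβδ
  obtain ⟨y, hy, hxy⟩ := exists_dist_lt_of_hausdorffDist_lt hx₀ hβδ
    (hausdorffEDist_ne_top_of_nonempty_of_bounded ⟨x₀, hx₀⟩ hβne hbdd
      (hbdd.subset (setOf_le_subset_setOf_le hαβ.le)))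
  exact (hfar y (hαβ.trans_le hy)).not_gt hxy

end Superlevel

section Cut

variable {X : Type*} [MetricSpace X] {u : X → ℝ} {α : ℝ}

theorem cut_of_ne_zero (u : X → ℝ) (hα : α ≠ 0) : cut u α = {x | α ≤ u x} := if_neg hα

theorem FUSCG.isCompact_setOf_le (hu : FUSCG u) (hα : α ∈ Ioc 0 1) :
    IsCompact {x | α ≤ u x} :=
  cut_of_ne_zero u hα.1.ne' ▸ hu.2 α hα

theorem FUSCG.isSeparable_setOf_pos (hu : FUSCG u) :
    TopologicalSpace.IsSeparable {x | 0 < u x} := by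
  have hunion : {x | 0 < u x} = ⋃ n : ℕ, {x | 1 / ((n : ℝ) + 1) ≤ u x} := by
    ext x
    simp only [mem_ofPred_eq, mem_iUnion]
    exact ⟨fun hx => (exists_nat_one_div_lt hx).imp fun _ hn => hn.le,
      fun ⟨_, hn⟩ => Nat.one_div_pos_of_nat.trans_le hn⟩
  rw [hunion]
  refine .iUnion fun n => (hu.isCompact_setOf_le ⟨Nat.one_div_pos_of_nat, ?_⟩).isSeparable
  exact div_le_one_of_le₀ (by simp) (by positivity)

theorem closure_setOf_lt_subset_cut (hu : FUSC u) (hα : α ∈ Ioc 0 1) :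
    closure {x | α < u x} ⊆ cut u α :=
  closure_minimal (cut_of_ne_zero u hα.1.ne' ▸ fun _ hx => show α ≤ u _ from le_of_lt hx)
    (hu.2 α (Ioc_subset_Icc_self hα)).2

theorem FUSCG.tendsto_hausdorffDist_cut_iff (hu : FUSCG u) (hα : α ∈ Ioo 0 1) :
    Tendsto (fun β => hausdorffDist (cut u β) (cut u α)) (𝓝[≠] α) (𝓝 0) ↔
      cut u α ⊆ closure {x | α < u x} := by
  have hcut : (fun β => hausdorffDist (cut u β) (cut u α)) =ᶠ[𝓝[≠] α]
      fun β => hausdorffDist {x | β ≤ u x} {x | α ≤ u x} := by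
    filter_upwards [nhdsWithin_le_nhds (Ioi_mem_nhds hα.1)] with β hβ
    rw [cut_of_ne_zero u (ne_of_gt hβ), cut_of_ne_zero u hα.1.ne']
  have hK : IsCompact {x | α ≤ u x} := hu.isCompact_setOf_le (Ioo_subset_Ioc_self hα)
  have hleft : ∀ᶠ β in 𝓝[<] α, IsCompact {x | β ≤ u x} := by
    filter_upwards [Ioo_mem_nhdsLT hα.1] with β hβ
    exact hu.isCompact_setOf_le ⟨hβ.1, hβ.2.le.trans hα.2.le⟩
  have hne : ∀ᶠ β in 𝓝[>] α, {x | β ≤ u x}.Nonempty := by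
    filter_upwards [Ioo_mem_nhdsGT hα.2] with β hβ
    exact cut_of_ne_zero u (hα.1.trans hβ.1).ne' ▸
      (hu.1.2 β ⟨(hα.1.trans hβ.1).le, hβ.2.le⟩).1
  rw [tendsto_congr' hcut, cut_of_ne_zero u hα.1.ne', ← nhdsLT_sup_nhdsGT, tendsto_sup]
  refine ⟨fun h => ?_, fun h => ⟨tendsto_hausdorffDist_superlevel_nhdsLT hleft,
    tendsto_hausdorffDist_superlevel_nhdsGT hK h⟩⟩
  by_contra hcl
  exact not_tendsto_hausdorffDist_superlevel_nhdsGT hK.isBounded hne hcl h.2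

theorem Pset_subset_image_isLocalMax (u : X → ℝ) :
    Pset u ⊆ u '' {x | 0 < u x ∧ IsLocalMax u x} := by
  rintro α ⟨hα, hcl⟩
  obtain ⟨x₀, hx₀, hx₀cl⟩ := exists_of_ssubset hcl
  rw [cut_of_ne_zero u hα.1.ne'] at hx₀
  have hux₀ : u x₀ = α := le_antisymm (not_lt.1 fun h => hx₀cl (subset_closure h)) hx₀
  refine ⟨x₀, ⟨hα.1.trans_le hx₀, ?_⟩, hux₀⟩
  filter_upwards [isClosed_closure.isOpen_compl.mem_nhds hx₀cl] with y hy
  exact hux₀ ▸ not_lt.1 fun h => hy (subset_closure h)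

end Cut

theorem P0set_eq_Pset_and_countable
    {X : Type*} [MetricSpace X] (u : X → ℝ) (hu : FUSCG u) :
    P0set u = Pset u ∧ (Pset u).Countable := by
  refine ⟨?_, (hu.isSeparable_setOf_pos.countable_image_isLocalMax u).mono
    (Pset_subset_image_isLocalMax u)⟩
  ext α
  refine and_congr_right fun hα => ?_
  rw [hu.tendsto_hausdorffDist_cut_iff hα, ssubset_def,
    and_iff_right (closure_setOf_lt_subset_cut hu.1 (Ioo_subset_Ioc_self hα))]
end

section
/- Let (X,d) be a metric space and let u, u_1, u_2, ... be fuzzy sets in F_USC(X). If there exists a dense subset P of (0,1) such that [u_n]_α Kuratowski converges to [u]_α for every α ∈ P, then u_n Γ-converges to u. -/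
open Set Filter Metric Topology MeasureTheory

section Aux

variable {Y : Type*} [MetricSpace Y]

lemma dense_below (P : Set ℝ) (hP : P ⊆ Set.Ioo (0:ℝ) 1)
    (hPd : Set.Ioo (0:ℝ) 1 ⊆ closure P) {t : ℝ} (ht : 0 < t) (ht1 : t ≤ 1)
    {ε : ℝ} (hε : 0 < ε) : ∃ α ∈ P, t - ε < α ∧ α < t := by
  set β := max (t - ε/2) (t/2) with hβ
  have hβt : β < t := max_lt (by linarith) (by linarith)
  have hβ0 : 0 < β := lt_of_lt_of_le (by linarith : (0:ℝ) < t/2) (le_max_right _ _)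
  have hβc : β ∈ closure P := hPd ⟨hβ0, lt_of_lt_of_le hβt ht1⟩
  have hr : (0:ℝ) < min (ε/2) (t - β) := lt_min (by linarith) (by linarith)
  obtain ⟨α, hαP, hd⟩ := Metric.mem_closure_iff.1 hβc _ hr
  rw [Real.dist_eq, abs_lt] at hd
  have h1 : α < t := by
    have := hd.1
    have := min_le_right (ε/2) (t - β)
    linarith
  have h2 : t - ε < α := by
    have := hd.2
    have := min_le_left (ε/2) (t - β)
    have := le_max_left (t - ε/2) (t/2)
    linarith
  exact ⟨α, hαP, h2, h1⟩

lemma mem_kurLiminf_of {C : ℕ → Set Y} {y : Y} (hne : ∀ n, (C n).Nonempty)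
    (h : ∀ ε > 0, ∀ᶠ n in atTop, Metric.infDist y (C n) < ε) :
    y ∈ kurLiminf C := by
  have hch : ∀ n : ℕ, ∃ z ∈ C n, dist y z < Metric.infDist y (C n) + 1/(n+1) := by
    intro n
    have h1 : (0:ℝ) < 1/(n+1) := by positivity
    exact (Metric.infDist_lt_iff (hne n)).1 (by linarith)
  choose f hf hfd using hch
  refine ⟨f, hf, tendsto_iff_dist_tendsto_zero.2 ?_⟩
  have hinf : Tendsto (fun n => Metric.infDist y (C n)) atTop (𝓝 0) := by
    refine Metric.tendsto_atTop.2 fun ε hε => ?_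
    obtain ⟨N, hN⟩ := eventually_atTop.1 (h ε hε)
    exact ⟨N, fun n hn => by
      rw [Real.dist_eq, sub_zero, abs_of_nonneg Metric.infDist_nonneg]
      exact hN n hn⟩
  have hsum : Tendsto (fun n : ℕ => Metric.infDist y (C n) + 1/(n+1)) atTop (𝓝 0) := by
    have := hinf.add tendsto_one_div_add_atTop_nhds_zero_nat
    simpa using this
  refine squeeze_zero (fun n => dist_nonneg) (fun n => ?_) hsum
  rw [dist_comm]
  exact (hfd n).le

end Aux

theorem gamma_convergence_of_kuratowski_on_dense
    {X : Type*} [MetricSpace X] (u : X → ℝ) (un : ℕ → X → ℝ)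
    (hu : FUSC u) (hun : ∀ n, FUSC (un n))
    (P : Set ℝ) (hP : P ⊆ Set.Ioo (0:ℝ) 1) (hPdense : Set.Ioo (0:ℝ) 1 ⊆ closure P)
    (h : ∀ α ∈ P, KurConv (fun n => cut (un n) α) (cut u α)) :
    GammaConv un u := by
  -- limsup ⊆ endo u
  have hsup : kurLimsup (fun n => endo (un n)) ⊆ endo u := by
    rintro ⟨x, t⟩ ⟨φ, hφ, f, hf, hft⟩
    have hx : Tendsto (fun n => (f n).1) atTop (𝓝 x) :=
      (continuous_fst.tendsto _).comp hft
    have ht2 : Tendsto (fun n => (f n).2) atTop (𝓝 t) :=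
      (continuous_snd.tendsto _).comp hft
    have htIcc : t ∈ Set.Icc (0:ℝ) 1 :=
      isClosed_Icc.mem_of_tendsto ht2 (Eventually.of_forall fun n => (hf n).1)
    refine ⟨htIcc, ?_⟩
    rcases le_or_gt t 0 with ht0 | ht0
    · exact ht0.trans (hu.1 x).1
    · refine le_of_forall_pos_le_add fun ε hε => ?_
      obtain ⟨α, hαP, hα1, hα2⟩ := dense_below P hP hPdense ht0 htIcc.2 hε
      obtain ⟨hα0, hαlt1⟩ := hP hαP
      -- eventually (f n).2 > α
      obtain ⟨N, hN⟩ := eventually_atTop.1 (ht2.eventually_mem (Ioi_mem_nhds hα2))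
      have hxcut : x ∈ cut u α := by
        rw [← (h α hαP).2]
        refine ⟨fun j => φ (j + N), hφ.comp (fun a b hab => by omega),
          fun j => (f (j + N)).1, fun j => ?_, hx.comp (tendsto_add_atTop_nat N)⟩
        simp only [cut, if_neg hα0.ne', Set.mem_setOf_eq]
        exact le_trans (hN (j + N) (by omega)).le (hf (j + N)).2
      simp only [cut, if_neg hα0.ne', Set.mem_setOf_eq] at hxcut
      show t ≤ u x + ε
      linarith
  -- endo u ⊆ liminf
  have hinf : endo u ⊆ kurLiminf (fun n => endo (un n)) := by
    rintro ⟨x, t⟩ ⟨⟨ht0, ht1⟩, htu⟩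
    refine mem_kurLiminf_of (fun n => ?_) (fun ε hε => ?_)
    · obtain ⟨x₀, _⟩ := ((hun n).2 1 (by norm_num)).1
      exact ⟨(x₀, 0), ⟨le_rfl, zero_le_one⟩, ((hun n).1 x₀).1⟩
    · rcases eq_or_lt_of_le ht0 with ht0' | ht0'
      · refine Eventually.of_forall fun n => lt_of_le_of_lt ?_ hε
        have hmem : ((x, t) : X × ℝ) ∈ endo (un n) := by
          refine ⟨⟨ht0, ht1⟩, ?_⟩
          rw [← ht0']
          exact ((hun n).1 x).1
        simpa using Metric.infDist_le_dist_of_mem (x := ((x, t) : X × ℝ)) hmem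
      · obtain ⟨α, hαP, hα1, hα2⟩ := dense_below P hP hPdense ht0' ht1 hε
        obtain ⟨hα0, hαlt1⟩ := hP hαP
        have hxcut : x ∈ kurLiminf (fun n => cut (un n) α) := by
          rw [(h α hαP).1, cut, if_neg hα0.ne']
          exact le_of_lt (lt_of_lt_of_le hα2 htu)
        obtain ⟨f, hf, hfx⟩ := hxcut
        have hev : ∀ᶠ n in atTop, dist (f n) x < ε :=
          hfx.eventually_mem (Metric.ball_mem_nhds x hε) |>.mono fun n hn => by
            simpa [Metric.mem_ball] using hn
        refine hev.mono fun n hn => ?_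
        have hmem : ((f n, α) : X × ℝ) ∈ endo (un n) := by
          refine ⟨⟨hα0.le, hαlt1.le⟩, ?_⟩
          have := hf n
          simpa only [cut, if_neg hα0.ne', Set.mem_setOf_eq] using this
        refine lt_of_le_of_lt (Metric.infDist_le_dist_of_mem hmem) ?_
        rw [Prod.dist_eq]
        refine max_lt (by rwa [dist_comm] at hn) ?_
        rw [Real.dist_eq, abs_lt]
        constructor <;> linarith
  have hls : kurLiminf (fun n => endo (un n)) ⊆ kurLimsup (fun n => endo (un n)) := by
    rintro y ⟨f, hf, hfy⟩
    exact ⟨id, strictMono_id, f, hf, hfy⟩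
  constructor
  · exact subset_antisymm ((hls.trans hsup)) hinf
  · exact subset_antisymm hsup (hinf.trans hls)
end

section
/- Let (X,d) be a metric space and let u, u_1, u_2, ... be fuzzy sets in F_USC(X). If u_n Γ-converges to u, then [u_n]_α Kuratowski converges to [u]_α for every α ∈ (0,1) \ P(u). -/
open Set Filter Metric Topology MeasureTheory

theorem kuratowski_cut_convergence_of_gamma
    {X : Type*} [MetricSpace X] (u : X → ℝ) (un : ℕ → X → ℝ)
    (hu : FUSC u) (hun : ∀ n, FUSC (un n))
    (h : GammaConv un u) :
    ∀ α ∈ Set.Ioo (0:ℝ) 1 \ Pset u, KurConv (fun n => cut (un n) α) (cut u α) := by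
  intro α hα
  obtain ⟨hIoo, hP⟩ := hα
  have hα0 : (0:ℝ) < α := hIoo.1
  have hα1 : α < 1 := hIoo.2
  have hαne : α ≠ 0 := ne_of_gt hα0
  have hαIcc : α ∈ Set.Icc (0:ℝ) 1 := ⟨le_of_lt hα0, le_of_lt hα1⟩
  have hcutu : cut u α = {x | α ≤ u x} := by simp [cut, hαne]
  have hcutun : ∀ n, cut (un n) α = {x | α ≤ un n x} := fun n => by simp [cut, hαne]
  have hclosed : IsClosed (cut u α) := ((hu.2 α hαIcc).2)
  -- closure {u > α} = cut u α
  have hsubcl : closure {x | α < u x} ⊆ cut u α := by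
    apply closure_minimal _ hclosed
    intro x hx
    rw [hcutu]; exact le_of_lt (show α < u x from hx)
  have heq : closure {x | α < u x} = cut u α := by
    by_contra hne
    exact hP ⟨hIoo, ssubset_iff_subset_ne.2 ⟨hsubcl, hne⟩⟩
  -- the approximation set S
  set S : Set X := {y | ∀ ε > 0, ∀ᶠ n in atTop, ∃ c ∈ cut (un n) α, dist c y < ε} with hS
  have hSclosed : IsClosed S := by
    apply isClosed_of_closure_subset
    intro y hy ε hε
    obtain ⟨z, hzS, hyz⟩ := Metric.mem_closure_iff.1 hy (ε/2) (by linarith)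
    filter_upwards [hzS (ε/2) (by linarith)] with n hn
    obtain ⟨c, hc, hcz⟩ := hn
    refine ⟨c, hc, ?_⟩
    calc dist c y ≤ dist c z + dist z y := dist_triangle c z y
      _ < ε/2 + ε/2 := by
          have := dist_comm y z ▸ hyz
          exact add_lt_add hcz (by rwa [dist_comm])
      _ = ε := by ring
  -- {u > α} ⊆ S, using the liminf part of Γ-convergence
  have hsubS : {x | α < u x} ⊆ S := by
    intro x hx
    have hxe : (x, u x) ∈ endo u := ⟨hu.1 x, le_refl _⟩
    rw [← h.1] at hxe
    obtain ⟨f, hf, hft⟩ := hxe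
    intro ε hε
    have hpos : 0 < min ε (u x - α) := lt_min hε (by simpa using hx)
    have := (Metric.tendsto_atTop.1 hft) (min ε (u x - α)) hpos
    obtain ⟨N, hN⟩ := this
    rw [eventually_atTop]
    refine ⟨N, fun n hn => ?_⟩
    have hd := hN n hn
    rw [Prod.dist_eq] at hd
    have h1 : dist (f n).1 x < min ε (u x - α) := lt_of_le_of_lt (le_max_left _ _) hd
    have h2 : dist (f n).2 (u x) < min ε (u x - α) := lt_of_le_of_lt (le_max_right _ _) hd
    have h2' : |(f n).2 - u x| < u x - α := lt_of_lt_of_le (Real.dist_eq _ _ ▸ h2) (min_le_right _ _)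
    have hαfn : α < (f n).2 := by
      have := abs_lt.1 h2'
      linarith [this.1]
    refine ⟨(f n).1, ?_, lt_of_lt_of_le h1 (min_le_left _ _)⟩
    rw [hcutun]
    exact le_trans (le_of_lt hαfn) (hf n).2
  -- S ⊆ kurLiminf
  have hne : ∀ n, (cut (un n) α).Nonempty := fun n => ((hun n).2 α hαIcc).1
  have hSsub : S ⊆ kurLiminf (fun n => cut (un n) α) := by
    intro y hy
    have h0 : Tendsto (fun n => Metric.infDist y (cut (un n) α)) atTop (𝓝 0) := by
      rw [Metric.tendsto_atTop]
      intro ε hε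
      obtain ⟨N, hN⟩ := eventually_atTop.1 (hy ε hε)
      refine ⟨N, fun n hn => ?_⟩
      obtain ⟨c, hc, hcy⟩ := hN n hn
      rw [Real.dist_eq, sub_zero, abs_of_nonneg Metric.infDist_nonneg]
      exact lt_of_le_of_lt (Metric.infDist_le_dist_of_mem hc) (by rwa [dist_comm])
    have hch : ∀ n, ∃ c ∈ cut (un n) α,
        dist y c < Metric.infDist y (cut (un n) α) + 1/(n+1) := by
      intro n
      apply (Metric.infDist_lt_iff (hne n)).1
      have : (0:ℝ) < 1/(n+1) := by positivity
      linarith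
    choose f hf hfd using hch
    refine ⟨f, hf, ?_⟩
    rw [tendsto_iff_dist_tendsto_zero]
    apply squeeze_zero (fun n => dist_nonneg)
      (g := fun n => Metric.infDist y (cut (un n) α) + 1/(n+1))
      (fun n => by rw [dist_comm]; exact le_of_lt (hfd n))
    have : Tendsto (fun n : ℕ => 1/((n:ℝ)+1)) atTop (𝓝 0) :=
      tendsto_one_div_add_atTop_nhds_zero_nat
    simpa using h0.add this
  -- kurLiminf ⊆ kurLimsup
  have hlsub : kurLiminf (fun n => cut (un n) α) ⊆ kurLimsup (fun n => cut (un n) α) := by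
    rintro y ⟨f, hf, hft⟩
    exact ⟨id, strictMono_id, f, hf, hft⟩
  -- kurLimsup ⊆ cut u α, using the limsup part of Γ-convergence
  have hupper : kurLimsup (fun n => cut (un n) α) ⊆ cut u α := by
    rintro x ⟨φ, hφ, f, hf, hft⟩
    have hmem : (x, α) ∈ kurLimsup (fun n => endo (un n)) := by
      refine ⟨φ, hφ, fun n => (f n, α), fun n => ⟨hαIcc, ?_⟩, ?_⟩
      · show α ≤ un (φ n) (f n)
        have h' : f n ∈ cut (un (φ n)) α := hf n
        rw [hcutun] at h'
        exact h'
      · exact hft.prodMk_nhds tendsto_const_nhds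
    rw [h.2] at hmem
    rw [hcutu]
    exact hmem.2
  have hchain : cut u α ⊆ kurLiminf (fun n => cut (un n) α) := by
    rw [← heq]
    exact (closure_minimal hsubS hSclosed).trans hSsub
  constructor
  · exact subset_antisymm (hlsub.trans hupper) hchain
  · exact subset_antisymm hupper (hchain.trans hlsub)
end

section
/- Let (X,d) be a metric space and let u, u_1, u_2, ... be fuzzy sets in F_USCG(X). Then the following statements are equivalent: (i) H_end(u_n, u) → 0; (ii) H([u_n]_α, [u]_α) → 0 for Lebesgue-almost every α ∈ (0,1); (iii) H([u_n]_α, [u]_α) → 0 for all α ∈ (0,1) \ P(u); (iv) H([u_n]_α, [u]_α) → 0 for all α in some dense subset P of (0,1) \ P(u); (v) H([u_n]_α, [u]_α) → 0 for all α in some countable dense subset P of (0,1) \ P(u). -/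
open Set Filter Metric Topology MeasureTheory

/-!
A point `(x, α)` of `end uₙ` is close to a point `(y, t)` of `end u` with `t` close to `α`,
so the endograph metric controls `[uₙ]_α` against the cuts of `u` at nearby levels. The map
`α ↦ [u]_α` is left continuous for the Hausdorff metric by compactness of the cuts, and right
continuous off the platform points `P(u)`, which gives (i) ⇒ (iii). Conversely, the endograph is
recovered up to `δ` from finitely many cuts at levels forming a `δ`-net of `[0, 1]`, and such
levels can be taken in any set dense in `(0, 1)`, which gives (iv) ⇒ (i) and, as the complement
of a null set is dense, (ii) ⇒ (i). Finally `P(u)` is countable, hence null: each `α ∈ P(u)` is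
the maximum of `u` on some ball with centre in a countable dense subset of `{u > 0}` and
rational radius.
-/

lemma tendsto_nhds_zero_of_forall_eventually_le {ι : Type*} {l : Filter ι} {f : ι → ℝ}
    (h0 : ∀ i, 0 ≤ f i) (h : ∀ ε > 0, ∀ᶠ i in l, f i ≤ ε) : Tendsto f l (𝓝 0) :=
  tendsto_order.2 ⟨fun _ ha => .of_forall fun i => ha.trans_le (h0 i),
    fun _ ha => (h _ (half_pos ha)).mono fun _ hi => hi.trans_lt (half_lt_self ha)⟩

section Cuts

variable {X : Type*} [MetricSpace X] {u v : X → ℝ} {α β : ℝ}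

lemma mem_cut_of_ne_zero (hα : α ≠ 0) {x : X} : x ∈ cut u α ↔ α ≤ u x := by
  simp [cut, hα]

lemma cut_subset_cut (hβ : 0 < β) (hβα : β ≤ α) : cut u α ⊆ cut u β := fun _ hx =>
  (mem_cut_of_ne_zero hβ.ne').2 <|
    hβα.trans ((mem_cut_of_ne_zero (hβ.trans_le hβα).ne').1 hx)

lemma FUSC.cut_nonempty (hu : FUSC u) (hα : α ∈ Icc (0:ℝ) 1) : (cut u α).Nonempty :=
  (hu.2 α hα).1

lemma FUSC.isClosed_cut (hu : FUSC u) (hα : α ∈ Icc (0:ℝ) 1) : IsClosed (cut u α) :=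
  (hu.2 α hα).2

lemma FUSCG.isCompact_cut (hu : FUSCG u) (hα : α ∈ Ioc (0:ℝ) 1) : IsCompact (cut u α) :=
  hu.2 α hα

lemma FUSCG.hausdorffEDist_cut_ne_top (hu : FUSCG u) (hv : FUSCG v) (hα : α ∈ Ioc (0:ℝ) 1) :
    hausdorffEDist (cut u α) (cut v α) ≠ ⊤ :=
  hausdorffEDist_ne_top_of_nonempty_of_bounded (hu.1.cut_nonempty (Ioc_subset_Icc_self hα))
    (hv.1.cut_nonempty (Ioc_subset_Icc_self hα)) (hu.isCompact_cut hα).isBounded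
    (hv.isCompact_cut hα).isBounded

end Cuts

section Endograph

variable {X : Type*} [MetricSpace X] {u v : X → ℝ} {α : ℝ}

lemma FUSC.mk_zero_mem_endo (hu : FUSC u) (x : X) : (x, (0:ℝ)) ∈ endo u :=
  ⟨left_mem_Icc.2 zero_le_one, (hu.1 x).1⟩

lemma FUSC.hausdorffEDist_endo_ne_top (hu : FUSC u) (hv : FUSC v) :
    hausdorffEDist (endo u) (endo v) ≠ ⊤ := by
  have hproj : ∀ w : X → ℝ, FUSC w → ∀ p ∈ endo u ∪ endo v,
      ∃ q ∈ endo w, edist p q ≤ 1 := by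
    intro w hw p hp
    have hp2 : p.2 ∈ Icc (0:ℝ) 1 := hp.elim (·.1) (·.1)
    refine ⟨(p.1, 0), hw.mk_zero_mem_endo p.1, ?_⟩
    rw [edist_dist, ENNReal.ofReal_le_one, Prod.dist_eq, dist_self, Real.dist_eq, sub_zero,
      abs_of_nonneg hp2.1]
    exact max_le zero_le_one hp2.2
  exact ne_top_of_le_ne_top ENNReal.one_ne_top <| hausdorffEDist_le_of_mem_edist
    (fun p hp => hproj v hv p (.inl hp)) (fun p hp => hproj u hu p (.inr hp))

lemma FUSC.exists_dist_lt_of_Hend_lt (hu : FUSC u) (hv : FUSC v) {δ : ℝ} (hδ : Hend u v < δ)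
    (hα : α ∈ Icc (0:ℝ) 1) {x : X} (hx : α ≤ u x) : ∃ y, α - δ < v y ∧ dist x y < δ := by
  obtain ⟨⟨y, t⟩, ⟨-, hty⟩, hd⟩ := exists_dist_lt_of_hausdorffDist_lt
    (show (x, α) ∈ endo u from ⟨hα, hx⟩) hδ (hu.hausdorffEDist_endo_ne_top hv)
  rw [Prod.dist_eq, max_lt_iff, Real.dist_eq, abs_lt] at hd
  exact ⟨y, by linarith [hd.2.2], hd.1⟩

end Endograph

section CutContinuity

variable {X : Type*} [MetricSpace X] {u : X → ℝ} {α : ℝ}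

lemma FUSCG.exists_cut_subset_thickening_of_lt (hu : FUSCG u) (hα : α ∈ Ioc (0:ℝ) 1)
    {ε : ℝ} (hε : 0 < ε) : ∃ β ∈ Ioo 0 α, cut u β ⊆ thickening ε (cut u α) := by
  have hlev : ∀ β : Ioo 0 α, (β : ℝ) ∈ Ioc (0:ℝ) 1 := fun β => ⟨β.2.1, β.2.2.le.trans hα.2⟩
  have : Nonempty (Ioo 0 α) := ⟨⟨α / 2, half_pos hα.1, half_lt_self hα.1⟩⟩
  obtain ⟨β, hβ⟩ := exists_subset_nhds_of_isCompact' (V := fun β : Ioo 0 α => cut u β)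
    (fun β₁ β₂ => ⟨⟨max β₁ β₂, lt_max_of_lt_left β₁.2.1, max_lt β₁.2.2 β₂.2.2⟩,
      cut_subset_cut β₁.2.1 (le_max_left _ _), cut_subset_cut β₂.2.1 (le_max_right _ _)⟩)
    (fun β => hu.isCompact_cut (hlev β))
    (fun β => hu.1.isClosed_cut (Ioc_subset_Icc_self (hlev β)))
    (U := thickening ε (cut u α)) fun x hx => by
      have hxα : x ∈ cut u α := by
        refine (mem_cut_of_ne_zero hα.1.ne').2 (le_of_forall_lt_imp_le_of_dense fun β hβ => ?_)
        rcases le_or_gt β 0 with hβ0 | hβ0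
        · exact hβ0.trans (hu.1.1 x).1
        · exact (mem_cut_of_ne_zero hβ0.ne').1 (mem_iInter.1 hx ⟨β, hβ0, hβ⟩)
      exact isOpen_thickening.mem_nhds (self_subset_thickening hε _ hxα)
  exact ⟨β, β.2, hβ⟩

lemma cut_subset_closure_of_notMem_Pset (hu : FUSC u) (hα : α ∈ Ioo (0:ℝ) 1)
    (hP : α ∉ Pset u) : cut u α ⊆ closure {x | α < u x} := by
  by_contra h
  exact hP ⟨hα, closure_minimal (fun x hx => (mem_cut_of_ne_zero hα.1.ne').2 (le_of_lt hx))
    (hu.isClosed_cut (Ioo_subset_Icc_self hα)), h⟩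

lemma FUSCG.exists_cut_subset_thickening_of_gt (hu : FUSCG u) (hα : α ∈ Ioo (0:ℝ) 1)
    (hP : α ∉ Pset u) {ε : ℝ} (hε : 0 < ε) :
    ∃ γ ∈ Ioc α 1, cut u α ⊆ thickening ε (cut u γ) := by
  have : Nonempty (Ioc α 1) := ⟨⟨1, hα.2, le_rfl⟩⟩
  obtain ⟨γ, hγ⟩ := (hu.isCompact_cut (Ioo_subset_Ioc_self hα)).elim_directed_cover
    (fun γ : Ioc α 1 => thickening ε (cut u γ)) (fun _ => isOpen_thickening)
    (fun x hx => by
      obtain ⟨y, hy, hxy⟩ :=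
        Metric.mem_closure_iff.1 (cut_subset_closure_of_notMem_Pset hu.1 hα hP hx) ε hε
      exact mem_iUnion.2 ⟨⟨u y, hy, (hu.1.1 y).2⟩, mem_thickening_iff.2
        ⟨y, (mem_cut_of_ne_zero (hα.1.trans hy).ne').2 le_rfl, hxy⟩⟩)
    (fun γ₁ γ₂ =>
      have hmin : α < min γ₁ γ₂ := lt_min γ₁.2.1 γ₂.2.1
      ⟨⟨min γ₁ γ₂, hmin, min_le_of_left_le γ₁.2.2⟩,
        thickening_subset_of_subset ε (cut_subset_cut (hα.1.trans hmin) (min_le_left _ _)),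
        thickening_subset_of_subset ε (cut_subset_cut (hα.1.trans hmin) (min_le_right _ _))⟩)
  exact ⟨γ, γ.2, hγ⟩

end CutContinuity

section Convergence

variable {X : Type*} [MetricSpace X] {u : X → ℝ} {un : ℕ → X → ℝ} {α : ℝ}

theorem tendsto_hausdorffDist_cut_of_tendsto_Hend (hu : FUSCG u) (hun : ∀ n, FUSC (un n))
    (h : Tendsto (fun n => Hend (un n) u) atTop (𝓝 0)) (hα : α ∈ Ioo (0:ℝ) 1)
    (hP : α ∉ Pset u) :
    Tendsto (fun n => hausdorffDist (cut (un n) α) (cut u α)) atTop (𝓝 0) := by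
  refine tendsto_nhds_zero_of_forall_eventually_le (fun _ => hausdorffDist_nonneg)
    fun ε hε => ?_
  obtain ⟨β, hβ, hβα⟩ :=
    hu.exists_cut_subset_thickening_of_lt (Ioo_subset_Ioc_self hα) (half_pos hε)
  obtain ⟨γ, hγ, hαγ⟩ := hu.exists_cut_subset_thickening_of_gt hα hP (half_pos hε)
  set δ := min (ε / 2) (min (α - β) (γ - α))
  have hδ : 0 < δ := lt_min (half_pos hε) (lt_min (sub_pos.2 hβ.2) (sub_pos.2 hγ.1))
  have hδε : δ ≤ ε / 2 := min_le_left _ _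
  have hδβ : δ ≤ α - β := (min_le_right _ _).trans (min_le_left _ _)
  have hδγ : δ ≤ γ - α := (min_le_right _ _).trans (min_le_right _ _)
  filter_upwards [h.eventually_lt_const hδ] with n hn
  refine hausdorffDist_le_of_mem_dist hε.le (fun x hx => ?_) fun z hz => ?_
  · obtain ⟨y, hy, hxy⟩ := (hun n).exists_dist_lt_of_Hend_lt hu.1 hn
      (Ioo_subset_Icc_self hα) ((mem_cut_of_ne_zero hα.1.ne').1 hx)
    obtain ⟨z, hz, hyz⟩ := mem_thickening_iff.1
      (hβα ((mem_cut_of_ne_zero hβ.1.ne').2 (by linarith)))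
    exact ⟨z, hz, by linarith [dist_triangle x y z]⟩
  · obtain ⟨w, hw, hzw⟩ := mem_thickening_iff.1 (hαγ hz)
    obtain ⟨y, hy, hwy⟩ := hu.1.exists_dist_lt_of_Hend_lt (hun n)
      (by rwa [Hend, hausdorffDist_comm]) ⟨(hα.1.trans hγ.1).le, hγ.2⟩
      ((mem_cut_of_ne_zero (hα.1.trans hγ.1).ne').1 hw)
    exact ⟨y, (mem_cut_of_ne_zero hα.1.ne').2 (by linarith),
      by linarith [dist_triangle z w y]⟩

end Convergence

section Platform

variable {X : Type*} [MetricSpace X] {u : X → ℝ}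

theorem FUSCG.countable_Pset (hu : FUSCG u) : (Pset u).Countable := by
  obtain ⟨D, hDc, hD⟩ : TopologicalSpace.IsSeparable (⋃ k : ℕ, cut u (1 / (k + 1))) :=
    .iUnion fun k =>
      (hu.isCompact_cut ⟨by positivity, div_le_one_of_le₀ (by simp) (by positivity)⟩).isSeparable
  refine ((hDc.prod (countable_univ (α := ℚ))).image
    fun p : X × ℚ => sSup (u '' ball p.1 p.2)).mono ?_
  rintro α ⟨hα, hsub⟩
  obtain ⟨x, hxα, hxS⟩ := exists_of_ssubset hsub
  obtain ⟨r, hr, hball⟩ := Metric.isOpen_iff.1 isClosed_closure.isOpen_compl x hxS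
  have hle : ∀ y ∈ ball x r, u y ≤ α := fun y hy =>
    not_lt.1 fun h => hball hy (subset_closure h)
  obtain ⟨k, hk⟩ := exists_nat_one_div_lt hα.1
  have hxD : x ∈ closure D :=
    hD (mem_iUnion.2 ⟨k, cut_subset_cut Nat.one_div_pos_of_nat hk.le hxα⟩)
  obtain ⟨d, hdD, hxd⟩ := Metric.mem_closure_iff.1 hxD (r / 3) (by positivity)
  obtain ⟨q, hq₁, hq₂⟩ := exists_rat_btwn (show r / 3 < 2 * r / 3 by linarith)
  have hball_sub : ball d q ⊆ ball x r := fun y hy => by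
    rw [mem_ball] at hy ⊢
    linarith [dist_triangle y d x, dist_comm x d]
  have hx : x ∈ ball d q := mem_ball.2 (hxd.trans hq₁)
  refine ⟨(d, q), ⟨hdD, mem_univ _⟩, IsGreatest.csSup_eq ⟨⟨x, hx, ?_⟩, ?_⟩⟩
  · exact le_antisymm (hle x (mem_ball_self hr)) ((mem_cut_of_ne_zero hα.1.ne').1 hxα)
  · rintro _ ⟨y, hy, rfl⟩
    exact hle y (hball_sub hy)

end Platform

lemma exists_finite_levels_of_subset_closure {S : Set ℝ} (hS : Ioo (0:ℝ) 1 ⊆ closure S)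
    {δ : ℝ} (hδ : 0 < δ) :
    ∃ G ⊆ S ∩ Ioo 0 1, G.Finite ∧ ∀ t ∈ Icc (0:ℝ) 1, t ≤ δ ∨ ∃ g ∈ G, g ≤ t ∧ t ≤ g + δ := by
  obtain ⟨G, hGS, hGfin, hcover⟩ := isCompact_Icc.elim_finite_subcover_image
    (s := Icc δ 1) (b := S ∩ Ioo 0 1) (c := fun s => Ioo s (s + δ)) (fun _ _ => isOpen_Ioo)
    fun t ht => by
      obtain ⟨s, hs, hsS⟩ := _root_.mem_closure_iff.1
        (hS (show t - δ / 2 ∈ Ioo (0:ℝ) 1 by constructor <;> linarith [ht.1, ht.2]))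
        (Ioo (t - δ) t) isOpen_Ioo ⟨by linarith, by linarith⟩
      exact mem_iUnion₂.2 ⟨s, ⟨hsS, by linarith [hs.1, ht.1], by linarith [hs.2, ht.2]⟩,
        hs.2, by linarith [hs.1]⟩
  refine ⟨G, hGS, hGfin, fun t ht => (le_or_gt t δ).imp id fun hδt => ?_⟩
  obtain ⟨g, hg, hgt, htg⟩ := mem_iUnion₂.1 (hcover ⟨hδt.le, ht.2⟩)
  exact ⟨g, hg, hgt.le, htg.le⟩

section LevelApproximation

variable {X : Type*} [MetricSpace X] {u v : X → ℝ} {un : ℕ → X → ℝ}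

lemma exists_mem_endo_dist_le_of_levels (hv : FUSC v) {G : Set ℝ} (hG : G ⊆ Ioo 0 1) {δ : ℝ}
    (hlev : ∀ t ∈ Icc (0:ℝ) 1, t ≤ δ ∨ ∃ g ∈ G, g ≤ t ∧ t ≤ g + δ)
    (hcut : ∀ g ∈ G, ∀ x ∈ cut u g, ∃ y ∈ cut v g, dist x y < δ) :
    ∀ p ∈ endo u, ∃ q ∈ endo v, dist p q ≤ δ := by
  rintro ⟨x, t⟩ ⟨ht, htx⟩
  rcases hlev t ht with htδ | ⟨g, hg, hgt, htg⟩
  · refine ⟨(x, 0), hv.mk_zero_mem_endo x, ?_⟩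
    rw [Prod.dist_eq, dist_self, Real.dist_eq, sub_zero, abs_of_nonneg ht.1]
    exact max_le (ht.1.trans htδ) htδ
  · have hg0 : g ≠ 0 := (hG hg).1.ne'
    obtain ⟨y, hy, hxy⟩ := hcut g hg x ((mem_cut_of_ne_zero hg0).2 (hgt.trans htx))
    refine ⟨(y, g), ⟨Ioo_subset_Icc_self (hG hg), (mem_cut_of_ne_zero hg0).1 hy⟩, ?_⟩
    rw [Prod.dist_eq, Real.dist_eq, abs_of_nonneg (sub_nonneg.2 hgt)]
    exact max_le hxy.le (by linarith)

lemma Hend_le_of_levels (hu : FUSCG u) (hv : FUSCG v) {G : Set ℝ} (hG : G ⊆ Ioo 0 1) {δ : ℝ}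
    (hδ : 0 ≤ δ) (hlev : ∀ t ∈ Icc (0:ℝ) 1, t ≤ δ ∨ ∃ g ∈ G, g ≤ t ∧ t ≤ g + δ)
    (hcut : ∀ g ∈ G, hausdorffDist (cut u g) (cut v g) < δ) : Hend u v ≤ δ := by
  have hfin (g) (hg : g ∈ G) :=
    hu.hausdorffEDist_cut_ne_top hv (Ioo_subset_Ioc_self (hG hg))
  refine hausdorffDist_le_of_mem_dist hδ
    (exists_mem_endo_dist_le_of_levels hv.1 hG hlev fun g hg x hx =>
      exists_dist_lt_of_hausdorffDist_lt hx (hcut g hg) (hfin g hg))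
    (exists_mem_endo_dist_le_of_levels hu.1 hG hlev fun g hg x hx =>
      exists_dist_lt_of_hausdorffDist_lt hx (by rw [hausdorffDist_comm]; exact hcut g hg)
        (by rw [hausdorffEDist_comm]; exact hfin g hg))

theorem tendsto_Hend_of_subset_closure (hu : FUSCG u) (hun : ∀ n, FUSCG (un n)) {S : Set ℝ}
    (hS : Ioo (0:ℝ) 1 ⊆ closure S)
    (hconv : ∀ α ∈ S, Tendsto (fun n => hausdorffDist (cut (un n) α) (cut u α)) atTop (𝓝 0)) :
    Tendsto (fun n => Hend (un n) u) atTop (𝓝 0) := by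
  refine tendsto_nhds_zero_of_forall_eventually_le (fun _ => hausdorffDist_nonneg)
    fun ε hε => ?_
  obtain ⟨G, hGS, hGfin, hlev⟩ := exists_finite_levels_of_subset_closure hS hε
  have hlevels : ∀ᶠ n in atTop, ∀ g ∈ G, hausdorffDist (cut (un n) g) (cut u g) < ε :=
    hGfin.eventually_all.2 fun g hg => (hconv g (hGS hg).1).eventually_lt_const hε
  filter_upwards [hlevels] with n hn
  exact Hend_le_of_levels (hun n) hu (fun g hg => (hGS hg).2) hε.le hlev hn

end LevelApproximation

theorem endograph_metric_level_decomposition_tfae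
    {X : Type*} [MetricSpace X] (u : X → ℝ) (un : ℕ → X → ℝ)
    (hu : FUSCG u) (hun : ∀ n, FUSCG (un n)) :
    List.TFAE
      [ Tendsto (fun n => Hend (un n) u) atTop (𝓝 0),
        ∀ᵐ α ∂(volume : Measure ℝ), α ∈ Set.Ioo (0:ℝ) 1 →
          Tendsto (fun n => hausdorffDist (cut (un n) α) (cut u α)) atTop (𝓝 0),
        ∀ α ∈ Set.Ioo (0:ℝ) 1 \ Pset u,
          Tendsto (fun n => hausdorffDist (cut (un n) α) (cut u α)) atTop (𝓝 0),
        ∃ P : Set ℝ, P ⊆ Set.Ioo (0:ℝ) 1 \ Pset u ∧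
          (Set.Ioo (0:ℝ) 1 \ Pset u) ⊆ closure P ∧
          ∀ α ∈ P,
            Tendsto (fun n => hausdorffDist (cut (un n) α) (cut u α)) atTop (𝓝 0),
        ∃ P : Set ℝ, P.Countable ∧ P ⊆ Set.Ioo (0:ℝ) 1 \ Pset u ∧
          (Set.Ioo (0:ℝ) 1 \ Pset u) ⊆ closure P ∧
          ∀ α ∈ P,
            Tendsto (fun n => hausdorffDist (cut (un n) α) (cut u α)) atTop (𝓝 0) ] := by
  have hPnull : ∀ᵐ α ∂(volume : Measure ℝ), α ∉ Pset u := hu.countable_Pset.ae_notMem volume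
  tfae_have 1 → 3 := fun h α hα =>
    tendsto_hausdorffDist_cut_of_tendsto_Hend hu (fun n => (hun n).1) h hα.1 hα.2
  tfae_have 3 → 2 := fun h3 => hPnull.mono fun α hP hα => h3 α ⟨hα, hP⟩
  tfae_have 2 → 1 := fun h2 => tendsto_Hend_of_subset_closure hu hun
    ((Measure.dense_of_ae h2).open_subset_closure_inter isOpen_Ioo) fun α hα => hα.2 hα.1
  tfae_have 3 → 5 := fun h3 =>
    have ⟨P, hPsub, hPc, hP⟩ :=
      (TopologicalSpace.IsSeparable.of_separableSpace
        (Ioo (0:ℝ) 1 \ Pset u)).exists_countable_dense_subset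
    ⟨P, hPc, hPsub, hP, fun α hα => h3 α (hPsub hα)⟩
  tfae_have 5 → 4 := fun ⟨P, _, hP⟩ => ⟨P, hP⟩
  tfae_have 4 → 1 := fun ⟨_, _, hPdense, hP⟩ => tendsto_Hend_of_subset_closure hu hun
    (((Measure.dense_of_ae hPnull).open_subset_closure_inter isOpen_Ioo).trans
      (closure_minimal hPdense isClosed_closure)) hP
  tfae_finish
end

section
/- Let (X,d) be a metric space and let 𝒟 be a set of nonempty compact subsets of X. Then 𝒟 is relatively compact in (K(X), H) (i.e., its closure in (K(X), H) is compact) if and only if the union D = ⋃{C : C ∈ 𝒟} is relatively compact in X (i.e., the closure of D in X is compact). -/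
open Set Filter Metric Topology MeasureTheory

/-! The Hausdorff metric on nonempty compact sets induces the Vietoris topology, in which both
directions are soft: the union of a compact family of compact sets is compact, and the nonempty
compact subsets of a fixed compact set form a compact and closed family. -/

namespace TopologicalSpace.NonemptyCompacts

variable {α : Type*} [TopologicalSpace α]

theorem isCompact_closure_biUnion_of_isCompact_closure [T2Space α]
    {S : Set (NonemptyCompacts α)} (hS : IsCompact (closure S)) :
    IsCompact (closure (⋃ K ∈ S, (K : Set α))) := by
  have hU := isCompact_biUnion_coe_of_isCompact hS
  refine hU.of_isClosed_subset isClosed_closure (closure_minimal ?_ hU.isClosed)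
  exact biUnion_subset_biUnion_left subset_closure

theorem isCompact_closure_of_isCompact_closure_biUnion
    {S : Set (NonemptyCompacts α)} (hS : IsCompact (closure (⋃ K ∈ S, (K : Set α)))) :
    IsCompact (closure S) := by
  have hsub := isCompact_subsets_of_isCompact hS
  refine hsub.of_isClosed_subset isClosed_closure (closure_minimal ?_ ?_)
  · exact fun K hK => (subset_biUnion_of_mem hK).trans subset_closure
  · exact isClosed_subsets_of_isClosed isClosed_closure

end TopologicalSpace.NonemptyCompacts

theorem relatively_compact_iff_union_relatively_compact
    {X : Type*} [MetricSpace X] (𝒟 : Set (TopologicalSpace.NonemptyCompacts X)) :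
    IsCompact (closure 𝒟) ↔ IsCompact (closure (⋃ C ∈ 𝒟, (C : Set X))) :=
  ⟨TopologicalSpace.NonemptyCompacts.isCompact_closure_biUnion_of_isCompact_closure,
    TopologicalSpace.NonemptyCompacts.isCompact_closure_of_isCompact_closure_biUnion⟩
end

section
/- Let (X,d) be a metric space and let 𝒟 be a set of nonempty compact subsets of X. Then 𝒟 is compact in (K(X), H) if and only if the union D = ⋃{C : C ∈ 𝒟} is compact in X and 𝒟 is closed in (K(X), H). -/
open Set Filter Metric Topology MeasureTheory

/-! The Hausdorff metric on `NonemptyCompacts X` induces the Vietoris topology, in which the union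
of a compact family of compact sets is compact and the compact subsets of a compact set form a
compact set. -/

theorem compact_iff_union_compact_and_closed
    {X : Type*} [MetricSpace X] (𝒟 : Set (TopologicalSpace.NonemptyCompacts X)) :
    IsCompact 𝒟 ↔ IsCompact (⋃ C ∈ 𝒟, (C : Set X)) ∧ IsClosed 𝒟 := by
  constructor
  · intro h𝒟
    exact ⟨TopologicalSpace.NonemptyCompacts.isCompact_biUnion_coe_of_isCompact h𝒟, h𝒟.isClosed⟩
  · rintro ⟨hunion, hclosed⟩
    have hsubsets := TopologicalSpace.NonemptyCompacts.isCompact_subsets_of_isCompact hunion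
    exact hsubsets.of_isClosed_subset hclosed fun C hC => subset_iUnion₂_of_subset C hC subset_rfl
end

section
/- Let (X,d) be a metric space and let U be a subset of F_USCG(X). Then U is totally bounded in (F_USCG(X), H_end) if and only if U(α) = ⋃_{u∈U} [u]_α is totally bounded in X for each α ∈ (0,1]. -/
open Set Filter Metric Topology MeasureTheory

section Aux

open Metric EMetric Set

variable {X : Type*} [MetricSpace X]

lemma endo_hausdorffEdist_ne_top {u v : X → ℝ}
    (hu : ∀ x, u x ∈ Set.Icc (0:ℝ) 1) (hv : ∀ x, v x ∈ Set.Icc (0:ℝ) 1) :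
    EMetric.hausdorffEdist (endo u) (endo v) ≠ ⊤ := by
  have key : ∀ (w w' : X → ℝ), (∀ x, w' x ∈ Set.Icc (0:ℝ) 1) →
      ∀ q ∈ endo w, ∃ q' ∈ endo w', edist q q' ≤ 1 := by
    rintro w w' hw' ⟨x, t⟩ ⟨⟨ht0, ht1⟩, _⟩
    dsimp only at ht0 ht1
    refine ⟨(x, 0), ⟨⟨le_refl 0, zero_le_one⟩, (hw' x).1⟩, ?_⟩
    rw [Prod.edist_eq]
    apply max_le
    · simp
    · rw [edist_dist]
      have h1 : dist t 0 ≤ 1 := by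
        rw [Real.dist_eq, sub_zero, abs_of_nonneg ht0]; exact ht1
      calc ENNReal.ofReal (dist t 0) ≤ ENNReal.ofReal 1 := ENNReal.ofReal_le_ofReal h1
        _ = 1 := ENNReal.ofReal_one
  exact ne_top_of_le_ne_top (by simp)
    (EMetric.hausdorffEdist_le_of_mem_edist (key u v hv) (key v u hu))

/-- Core geometric approximation lemma. -/
lemma endo_approx {u v : X → ℝ} {δ : ℝ} {M : ℕ} {N : Set X}
    (hδ : 0 < δ)
    (hv : ∀ x, v x ∈ Set.Icc (0:ℝ) 1)
    (hM : 1 ≤ (M : ℝ) * δ)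
    (hnet : ∀ x, δ ≤ u x → ∃ p ∈ N, dist p x < δ)
    (hsig : ∀ i : ℕ, 1 ≤ i → i ≤ M → ∀ p ∈ N,
      (∃ x, (i:ℝ) * δ ≤ u x ∧ dist p x < δ) → (∃ y, (i:ℝ) * δ ≤ v y ∧ dist p y < δ)) :
    ∀ q ∈ endo u, ∃ q' ∈ endo v, dist q q' ≤ 2 * δ := by
  rintro ⟨x, t⟩ ⟨⟨ht0, ht1⟩, htu⟩
  dsimp only at ht0 ht1 htu
  by_cases hc : t ≤ δ
  · refine ⟨(x, 0), ⟨⟨le_refl 0, zero_le_one⟩, (hv x).1⟩, ?_⟩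
    rw [Prod.dist_eq]
    apply max_le
    · simp only [dist_self]
      linarith
    · rw [Real.dist_eq, sub_zero, abs_of_nonneg ht0]
      linarith
  · push_neg at hc
    set i := ⌊t / δ⌋₊ with hidef
    have hi1 : 1 ≤ i := by
      apply Nat.le_floor
      rw [Nat.cast_one, le_div_iff₀ hδ]
      linarith
    have hile : (i : ℝ) * δ ≤ t := by
      have h1 : (i : ℝ) ≤ t / δ := Nat.floor_le (div_nonneg ht0 hδ.le)
      calc (i:ℝ) * δ ≤ (t / δ) * δ := by nlinarith
        _ = t := by field_simp
    have hlt : t - (i : ℝ) * δ < δ := by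
      have h2 : t / δ < (i : ℝ) + 1 := Nat.lt_floor_add_one (t / δ)
      have : t < ((i:ℝ) + 1) * δ := by
        calc t = (t / δ) * δ := by field_simp
          _ < ((i:ℝ) + 1) * δ := by nlinarith
      linarith
    have hiM : i ≤ M := by
      by_contra h
      push_neg at h
      have h3 : (M : ℝ) + 1 ≤ (i : ℝ) := by exact_mod_cast h
      nlinarith
    have hxu : (i : ℝ) * δ ≤ u x := le_trans hile htu
    have hδi : δ ≤ (i : ℝ) * δ := by
      have : (1 : ℝ) ≤ (i : ℝ) := by exact_mod_cast hi1
      nlinarith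
    obtain ⟨p, hpN, hpx⟩ := hnet x (le_trans hδi hxu)
    obtain ⟨y, hyv, hpy⟩ := hsig i hi1 hiM p hpN ⟨x, hxu, hpx⟩
    refine ⟨(y, (i : ℝ) * δ), ⟨⟨by positivity, le_trans hile ht1⟩, hyv⟩, ?_⟩
    rw [Prod.dist_eq]
    apply max_le
    · calc dist x y ≤ dist x p + dist p y := dist_triangle x p y
        _ ≤ δ + δ := by rw [dist_comm x p]; linarith
        _ = 2 * δ := by ring
    · show dist t ((i:ℝ) * δ) ≤ 2 * δ
      rw [Real.dist_eq, abs_of_nonneg (by linarith)]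
      linarith

end Aux


theorem totally_bounded_FUSCG_iff_cuts_totally_bounded
    {X : Type*} [MetricSpace X] (U : Set (X → ℝ)) (hU : ∀ u ∈ U, FUSCG u) :
    (∀ ε > (0:ℝ), ∃ T : Set (X → ℝ), T ⊆ U ∧ T.Finite ∧
        ∀ u ∈ U, ∃ v ∈ T, Hend u v < ε) ↔
      ∀ α ∈ Set.Ioc (0:ℝ) 1, TotallyBounded (⋃ u ∈ U, cut u α) := by
  classical
  constructor
  · -- forward direction
    intro h α hα
    rw [Metric.totallyBounded_iff]
    intro ε hε
    obtain ⟨hα0, hα1⟩ := hα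
    set δ := min (ε/2) (α/2) with hδdef
    have hδ : 0 < δ := lt_min (by linarith) (by linarith)
    have hδε : δ ≤ ε/2 := min_le_left _ _
    have hδα : δ ≤ α/2 := min_le_right _ _
    obtain ⟨T, hTU, hTfin, hTnet⟩ := h δ hδ
    have hαδ : α - δ ∈ Set.Ioc (0:ℝ) 1 := ⟨by linarith, by linarith⟩
    have hScomp : IsCompact (⋃ v ∈ T, cut v (α - δ)) :=
      hTfin.isCompact_biUnion (fun v hv => (hU v (hTU hv)).2 (α - δ) hαδ)
    obtain ⟨t, htfin, htcov⟩ :=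
      Metric.totallyBounded_iff.mp hScomp.totallyBounded (ε/2) (by linarith)
    refine ⟨t, htfin, ?_⟩
    rintro x hx
    simp only [Set.mem_iUnion] at hx
    obtain ⟨u, hu, hxu⟩ := hx
    obtain ⟨v, hvT, hvd⟩ := hTnet u hu
    have hxcut : α ≤ u x := by
      rw [cut, if_neg (ne_of_gt hα0)] at hxu
      exact hxu
    have hmem : (x, α) ∈ endo u := ⟨⟨hα0.le, hα1⟩, hxcut⟩
    have hne := endo_hausdorffEdist_ne_top (hU u hu).1.1 (hU v (hTU hvT)).1.1
    have hvd' : Metric.hausdorffDist (endo u) (endo v) < δ := hvd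
    obtain ⟨⟨y, s⟩, hq, hqd⟩ := Metric.exists_dist_lt_of_hausdorffDist_lt hmem hvd' hne
    rw [Prod.dist_eq] at hqd
    have hd1 : dist x y < δ := lt_of_le_of_lt (le_max_left _ _) hqd
    have hd2 : |α - s| < δ := by
      have h5 := lt_of_le_of_lt (le_max_right _ _) hqd
      rwa [Real.dist_eq] at h5
    have hys : α - δ ≤ v y := by
      have h6 : α - s ≤ |α - s| := le_abs_self _
      have h7 : s ≤ v y := hq.2
      linarith
    have hyS : y ∈ ⋃ v ∈ T, cut v (α - δ) := by
      simp only [Set.mem_iUnion]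
      refine ⟨v, hvT, ?_⟩
      rw [cut, if_neg (ne_of_gt hαδ.1)]
      exact hys
    have h8 := htcov hyS
    simp only [Set.mem_iUnion, Metric.mem_ball] at h8 ⊢
    obtain ⟨p, hp, hyp⟩ := h8
    refine ⟨p, hp, ?_⟩
    have h9 : dist x p ≤ dist x y + dist y p := dist_triangle x y p
    linarith
  · -- backward direction
    intro h ε hε
    set δ := min ε 1 / 4 with hδdef
    have hm0 : 0 < min ε 1 := lt_min hε one_pos
    have hm1 : min ε 1 ≤ 1 := min_le_right _ _
    have hmε : min ε 1 ≤ ε := min_le_left _ _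
    have hδ : 0 < δ := by rw [hδdef]; linarith
    obtain ⟨N, hNfin, hNcov⟩ :=
      Metric.totallyBounded_iff.mp (h δ ⟨hδ, by rw [hδdef]; linarith⟩) δ hδ
    set M := ⌈1/δ⌉₊ with hMdef
    have hM : 1 ≤ (M:ℝ) * δ := by
      have h1 : (1:ℝ)/δ ≤ (M:ℝ) := Nat.le_ceil (1/δ)
      calc (1:ℝ) = (1/δ) * δ := by field_simp
        _ ≤ (M:ℝ) * δ := by nlinarith
    set φ : (X → ℝ) → (Fin (M+1) → Set X) :=
      fun u i => {p | p ∈ N ∧ ∃ x, ((i:ℕ):ℝ) * δ ≤ u x ∧ dist p x < δ} with hφdef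
    have hφfin : (φ '' U).Finite := by
      apply Set.Finite.subset (Set.Finite.pi' (fun _ : Fin (M+1) => hNfin.finite_subsets))
      rintro _ ⟨u, hu, rfl⟩ i p hp
      exact hp.1
    set rep : (Fin (M+1) → Set X) → (X → ℝ) :=
      fun s => if h : ∃ u, u ∈ U ∧ φ u = s then h.choose else fun _ => 0 with hrepdef
    refine ⟨rep '' (φ '' U), ?_, hφfin.image rep, ?_⟩
    · rintro _ ⟨s, hs, rfl⟩
      obtain ⟨u, hu, rfl⟩ := hs
      have hex : ∃ w, w ∈ U ∧ φ w = φ u := ⟨u, hu, rfl⟩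
      simp only [hrepdef, dif_pos hex]
      exact hex.choose_spec.1
    · intro u hu
      have hex : ∃ w, w ∈ U ∧ φ w = φ u := ⟨u, hu, rfl⟩
      refine ⟨rep (φ u), ⟨φ u, Set.mem_image_of_mem φ hu, rfl⟩, ?_⟩
      set v := rep (φ u) with hvdef
      have hv : v ∈ U ∧ φ v = φ u := by
        rw [hvdef, hrepdef]
        simp only [dif_pos hex]
        exact ⟨hex.choose_spec.1, hex.choose_spec.2⟩
      have hnet : ∀ w, w ∈ U → ∀ x, δ ≤ w x → ∃ p ∈ N, dist p x < δ := by
        intro w hw x hx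
        have hxcut : x ∈ ⋃ u ∈ U, cut u δ := by
          simp only [Set.mem_iUnion]
          refine ⟨w, hw, ?_⟩
          rw [cut, if_neg (ne_of_gt hδ)]
          exact hx
        have h2 := hNcov hxcut
        simp only [Set.mem_iUnion, Metric.mem_ball] at h2
        obtain ⟨p, hp, hxp⟩ := h2
        exact ⟨p, hp, by rwa [dist_comm]⟩
      have hsig : ∀ w w', φ w = φ w' → ∀ i : ℕ, 1 ≤ i → i ≤ M → ∀ p ∈ N,
          (∃ x, (i:ℝ)*δ ≤ w x ∧ dist p x < δ) → ∃ y, (i:ℝ)*δ ≤ w' y ∧ dist p y < δ := by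
        intro w w' hww' i hi1 hiM p hp hex'
        have hiFin : i < M + 1 := Nat.lt_succ_of_le hiM
        have h1 : p ∈ φ w ⟨i, hiFin⟩ := ⟨hp, hex'⟩
        rw [hww'] at h1
        exact h1.2
      have h1 := endo_approx hδ (hU v hv.1).1.1 hM (hnet u hu) (hsig u v hv.2.symm)
      have h2 := endo_approx hδ (hU u hu).1.1 hM (hnet v hv.1) (hsig v u hv.2)
      have hHd : Metric.hausdorffDist (endo u) (endo v) ≤ 2*δ :=
        Metric.hausdorffDist_le_of_mem_dist (by linarith) h1 h2
      have h3 : 2*δ < ε := by rw [hδdef]; linarith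
      calc Hend u v ≤ 2*δ := hHd
        _ < ε := h3
end
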